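/- arXiv:2407.09937 — 9 statements merged into one kernel-verified Lean document; each statement's English description precedes it below -/
import Mathlib

section
/- Let 𝔤 be a finite-dimensional real Lie algebra such that the ideal 𝔤^∞ := ⋂_{j≥1} 𝔤^j is abelian, and let 𝔥 ⊆ 𝔤 be a Cartan subalgebra. Then 𝔤^∞ ∩ 𝔥 = {0} and 𝔤^∞ + 𝔥 = 𝔤; that is, 𝔤 decomposes as the vector-space direct sum of the abelian ideal 𝔤^∞ and the Cartan subalgebra 𝔥. -/
/-!
Fitting's lemma for the nilpotent algebra `H` acting on `L` gives `L = H ⊕ F`, where `H` is the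
zero root space and `F` the positive Fitting component, which lies in `L^∞`. Since `L^∞` is
abelian, so is `F`, and expanding `⁅h + f, b + g⁆` shows `L^k ⊆ H^k + F` for every `k`; nilpotency
of `H` then gives `L^∞ ⊆ F`. Hence `L^∞ = F` is a complement of `H`.
-/

open LieModule

namespace LieModule

variable {R L : Type*} [CommRing R] [LieRing L] [LieAlgebra R L]

theorem lowerCentralSeries_le_restr {M : Type*} [AddCommGroup M] [Module R M]
    [LieRingModule L M] (H : LieSubalgebra R L) (k : ℕ) :
    lowerCentralSeries R H M k ≤ (lowerCentralSeries R L M k).restr H := by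
  induction k with
  | zero => exact le_top
  | succ k ih =>
    rw [lowerCentralSeries_succ, LieSubmodule.lie_le_iff]
    intro x _ m hm
    rw [LieSubmodule.mem_restr, lowerCentralSeries_succ]
    exact LieSubmodule.lie_mem_lie (LieSubmodule.mem_top (x : L)) (ih hm)

section AbelianComplement

variable {H : LieSubalgebra R L} {F : LieSubmodule R H L}
  (hHF : Codisjoint H.toSubmodule F.toSubmodule) (hF : ∀ f ∈ F, ∀ g ∈ F, ⁅f, g⁆ = 0)
include hHF hF

theorem lie_mem_map_lowerCentralSeries_sup {k : ℕ} (x : L) {m : L}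
    (hm : m ∈ (lowerCentralSeries R H H k).toSubmodule.map H.toSubmodule.subtype ⊔ F.toSubmodule) :
    ⁅x, m⁆ ∈
      (lowerCentralSeries R H H (k + 1)).toSubmodule.map H.toSubmodule.subtype ⊔ F.toSubmodule := by
  obtain ⟨h, f, hh, hf, rfl⟩ := Submodule.codisjoint_iff_exists_add_eq.mp hHF x
  obtain ⟨_, ⟨b, hb, rfl⟩, g, hg, rfl⟩ := Submodule.mem_sup.mp hm
  have hhb : ⁅h, (b : L)⁆ ∈
      (lowerCentralSeries R H H (k + 1)).toSubmodule.map H.toSubmodule.subtype :=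
    ⟨⁅(⟨h, hh⟩ : H), b⁆, by
      change _ ∈ lowerCentralSeries R H H (k + 1)
      rw [lowerCentralSeries_succ]
      exact LieSubmodule.lie_mem_lie (LieSubmodule.mem_top _) hb, rfl⟩
  have hhg : ⁅h, g⁆ ∈ F := F.lie_mem (x := (⟨h, hh⟩ : H)) hg
  have hbf : ⁅(b : L), f⁆ ∈ F := F.lie_mem (x := b) hf
  have hexpand : ⁅h + f, (b : L) + g⁆ = ⁅h, (b : L)⁆ + (⁅h, g⁆ - ⁅(b : L), f⁆) := by
    rw [add_lie, lie_add, lie_add, hF f hf g hg, ← lie_skew (b : L) f]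
    abel
  change ⁅h + f, (b : L) + g⁆ ∈ _
  rw [hexpand]
  exact Submodule.add_mem_sup hhb (sub_mem hhg hbf)

theorem lowerCentralSeries_le_map_sup (k : ℕ) :
    (lowerCentralSeries R L L k).toSubmodule ≤
      (lowerCentralSeries R H H k).toSubmodule.map H.toSubmodule.subtype ⊔ F.toSubmodule := by
  induction k with
  | zero =>
    rw [lowerCentralSeries_zero, lowerCentralSeries_zero, LieSubmodule.top_toSubmodule,
      LieSubmodule.top_toSubmodule, Submodule.map_top, Submodule.range_subtype, hHF.eq_top]
  | succ k ih =>
    rw [lowerCentralSeries_succ, LieSubmodule.lieIdeal_oper_eq_linear_span', Submodule.span_le]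
    rintro _ ⟨x, -, m, hm, rfl⟩
    exact lie_mem_map_lowerCentralSeries_sup hHF hF x (ih hm)

theorem iInf_lowerCentralSeries_le_of_codisjoint [LieRing.IsNilpotent H] :
    (⨅ k, lowerCentralSeries R L L k).toSubmodule ≤ F.toSubmodule := by
  obtain ⟨k, hk⟩ := IsNilpotent.nilpotent R H H
  calc (⨅ k, lowerCentralSeries R L L k).toSubmodule
      ≤ (lowerCentralSeries R L L k).toSubmodule := iInf_le (α := LieIdeal R L) _ k
    _ ≤ _ := lowerCentralSeries_le_map_sup hHF hF k
    _ = F.toSubmodule := by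
      rw [hk, LieSubmodule.bot_toSubmodule, Submodule.map_bot, bot_sup_eq]

end AbelianComplement

variable [IsNoetherian R L] [IsArtinian R L] (H : LieSubalgebra R L) [H.IsCartanSubalgebra]

theorem isCompl_toSubmodule_posFittingComp :
    IsCompl H.toSubmodule (posFittingComp R H L).toSubmodule := by
  rw [← LieSubalgebra.coe_toLieSubmodule, LieSubmodule.isCompl_toSubmodule,
    ← LieAlgebra.rootSpace_zero_eq R L H]
  exact isCompl_genWeightSpace_zero_posFittingComp R H L

theorem iInf_lowerCentralSeries_eq_posFittingComp_of_isCartanSubalgebra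
    (habelian : ∀ x ∈ (⨅ k, lowerCentralSeries R L L k),
      ∀ y ∈ (⨅ k, lowerCentralSeries R L L k), ⁅x, y⁆ = 0) :
    (⨅ k, lowerCentralSeries R L L k).toSubmodule = (posFittingComp R H L).toSubmodule := by
  have hFI : (posFittingComp R H L).toSubmodule ≤ (⨅ k, lowerCentralSeries R L L k).toSubmodule := by
    intro x hx
    rw [LieSubmodule.mem_toSubmodule, LieSubmodule.mem_iInf]
    intro k
    exact lowerCentralSeries_le_restr H k
      ((LieSubmodule.mem_iInf _).mp (posFittingComp_le_iInf_lowerCentralSeries R H L hx) k)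
  refine le_antisymm ?_ hFI
  exact iInf_lowerCentralSeries_le_of_codisjoint (isCompl_toSubmodule_posFittingComp H).codisjoint
    fun f hf g hg ↦ habelian f (hFI hf) g (hFI hg)

end LieModule

/-- If `𝔤^∞ := ⋂_{j≥1} 𝔤^j` is abelian and `𝔥` is a Cartan subalgebra of the
finite-dimensional real Lie algebra `𝔤`, then `𝔤 = 𝔤^∞ ∔ 𝔥` as vector spaces. -/
theorem stmt1 (L : Type*) [LieRing L] [LieAlgebra ℝ L] [Module.Finite ℝ L]
    (habelian : ∀ x ∈ (⨅ k, LieModule.lowerCentralSeries ℝ L L k),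
      ∀ y ∈ (⨅ k, LieModule.lowerCentralSeries ℝ L L k), ⁅x, y⁆ = 0)
    (H : LieSubalgebra ℝ L) (hH : H.IsCartanSubalgebra) :
    (∀ x, x ∈ (⨅ k, LieModule.lowerCentralSeries ℝ L L k) → x ∈ H → x = 0) ∧
      (∀ x : L, ∃ y ∈ (⨅ k, LieModule.lowerCentralSeries ℝ L L k), ∃ z ∈ H, x = y + z) := by
  have hcompl := isCompl_toSubmodule_posFittingComp H
  rw [← iInf_lowerCentralSeries_eq_posFittingComp_of_isCartanSubalgebra H habelian] at hcompl
  refine ⟨fun x hxI hxH ↦ Submodule.disjoint_def.mp hcompl.disjoint x hxH hxI, fun x ↦ ?_⟩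
  obtain ⟨y, z, hy, hz, rfl⟩ := Submodule.codisjoint_iff_exists_add_eq.mp hcompl.symm.codisjoint x
  exact ⟨y, hy, z, hz, rfl⟩
end

section
/- Let 𝔤 be a finite-dimensional real Lie algebra with trivial centre such that the ideal 𝔤^∞ := ⋂_{j≥1} 𝔤^j is abelian. Then 𝔤^∞ is a maximal abelian subalgebra of 𝔤; that is, every abelian Lie subalgebra 𝔞 ⊆ 𝔤 with 𝔤^∞ ⊆ 𝔞 satisfies 𝔞 = 𝔤^∞. -/
/-!
Let `𝔫 = 𝔤^∞` and let `𝔠` be its centralizer, the Lie ideal `LieModule.ker R L 𝔫`. Since `𝔫`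
acts trivially on `𝔠`, `𝔤` acts on `𝔠` through the nilpotent quotient `𝔤 / 𝔫`. Fitting's
decomposition for this action writes `𝔠` as the direct sum of its zero generalized weight space and
`𝔠^∞ ⊆ 𝔤^∞ = 𝔫`; a nonzero zero weight space would contain a nonzero invariant vector, i.e. a
central element of `𝔤`. Hence `𝔠 ⊆ 𝔫`, and an abelian subalgebra containing `𝔫` lies in `𝔠`.
-/

open LieModule

namespace LieModule

variable {R L M : Type*} [CommRing R] [LieRing L] [LieAlgebra R L]
  [AddCommGroup M] [Module R M] [LieRingModule L M] [LieModule R L M]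

theorem iInf_lowerCentralSeries_eq_top_of_maxTrivSubmodule_eq_bot [LieRing.IsNilpotent L]
    [IsNoetherian R M] [IsArtinian R M] (h : maxTrivSubmodule R L M = ⊥) :
    ⨅ k, lowerCentralSeries R L M k = ⊤ := by
  have hbot : (⊥ : LieSubmodule R L M).normalizer = ⊥ := by
    rwa [LieSubmodule.normalizer_bot_eq_maxTrivSubmodule]
  have hzero : genWeightSpace M (0 : L → R) = ⊥ := by
    simp [← iSup_ucs_eq_genWeightSpace_zero, LieSubmodule.ucs_eq_self_of_normalizer_eq_self hbot]
  have hcompl := isCompl_genWeightSpace_zero_posFittingComp R L M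
  rw [hzero] at hcompl
  rw [iInf_lowerCentralSeries_eq_posFittingComp]
  simpa using codisjoint_iff.mp hcompl.codisjoint

attribute [local instance] LieRing.ofAssociativeRing in
theorem isNilpotent_range_toEnd_of_lowerCentralSeries_le_ker {k : ℕ}
    (hk : lowerCentralSeries R L L k ≤ LieModule.ker R L M) :
    LieRing.IsNilpotent (toEnd R L M).range := by
  rw [LieRing.IsNilpotent, isNilpotent_iff R]
  refine ⟨k, ?_⟩
  rw [← LieIdeal.lowerCentralSeries_map_eq k (toEnd R L M).surjective_rangeRestrict,
    LieIdeal.map_eq_bot_iff]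
  intro x hx
  have hx' : toEnd R L M x = 0 := LieHom.mem_ker.mp (hk hx)
  exact LieHom.mem_ker.mpr (Subtype.ext hx')

attribute [local instance] LieRing.ofAssociativeRing in
theorem iInf_lowerCentralSeries_eq_top_of_lowerCentralSeries_le_ker
    [IsNoetherian R M] [IsArtinian R M] {k : ℕ}
    (hk : lowerCentralSeries R L L k ≤ LieModule.ker R L M) (h : maxTrivSubmodule R L M = ⊥) :
    ⨅ k, lowerCentralSeries R L M k = ⊤ := by
  have := isNilpotent_range_toEnd_of_lowerCentralSeries_le_ker hk
  have hrange : maxTrivSubmodule R (toEnd R L M).range M = ⊥ := by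
    refine eq_bot_iff.mpr fun m hm ↦ h.le <| (mem_maxTrivSubmodule R L M m).mpr fun x ↦ ?_
    exact hm ⟨toEnd R L M x, LieHom.mem_range_self _ x⟩
  have htop := iInf_lowerCentralSeries_eq_top_of_maxTrivSubmodule_eq_bot hrange
  rw [← LieSubmodule.toSubmodule_inj] at htop ⊢
  simpa only [LieSubmodule.iInf_toSubmodule, coe_lcs_range_toEnd_eq,
    LieSubmodule.top_toSubmodule] using htop

end LieModule

section

variable {R L : Type*} [CommRing R] [LieRing L] [LieAlgebra R L]

theorem LieIdeal.le_ker_ker (I : LieIdeal R L) : I ≤ LieModule.ker R L (LieModule.ker R L I) := by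
  intro y hy
  rw [LieModule.mem_ker]
  rintro ⟨c, hc⟩
  have hcy : ⁅c, y⁆ = 0 := congrArg Subtype.val ((LieModule.mem_ker R L I c).mp hc ⟨y, hy⟩)
  ext
  change ⁅y, c⁆ = 0
  rw [← lie_skew, hcy, neg_zero]

namespace LieAlgebra

theorem ker_iInf_lowerCentralSeries_le_of_center_eq_bot [IsNoetherian R L] [IsArtinian R L]
    (h : center R L = ⊥) :
    LieModule.ker R L (⨅ k, lowerCentralSeries R L L k : LieIdeal R L) ≤
      ⨅ k, lowerCentralSeries R L L k := by
  set C := LieModule.ker R L (⨅ k, lowerCentralSeries R L L k : LieIdeal R L)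
  obtain ⟨k, hk⟩ := (eventually_iInf_lowerCentralSeries_eq R L L).exists
  have hC : maxTrivSubmodule R L C = ⊥ := by
    refine eq_bot_iff.mpr fun c hc ↦ ?_
    have : (c : L) ∈ center R L := (mem_maxTrivSubmodule R L L _).mpr fun x ↦
      congrArg Subtype.val ((mem_maxTrivSubmodule R L C c).mp hc x)
    rw [h, LieSubmodule.mem_bot] at this
    exact (LieSubmodule.mem_bot c).mpr (Subtype.ext this)
  have hnil : lowerCentralSeries R L L k ≤ LieModule.ker R L C := by
    rw [← hk]
    exact LieIdeal.le_ker_ker _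
  have htop := iInf_lowerCentralSeries_eq_top_of_lowerCentralSeries_le_ker hnil hC
  intro x hx
  have hmem : (⟨x, hx⟩ : C) ∈ ⨅ k, lowerCentralSeries R L C k := htop ▸ LieSubmodule.mem_top _
  rw [LieSubmodule.mem_iInf] at hmem ⊢
  exact fun j ↦ lieModule_lcs_map_le (f := LieHom.id) (g := C.incl.toLinearMap)
    (fun _ _ ↦ rfl) j ⟨_, hmem j, rfl⟩

end LieAlgebra

end

theorem stmt3_general (L : Type*) [LieRing L] [LieAlgebra ℝ L] [Module.Finite ℝ L]
    (hcenter : LieAlgebra.center ℝ L = ⊥)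
    (a : LieSubalgebra ℝ L) (haAb : ∀ x ∈ a, ∀ y ∈ a, ⁅x, y⁆ = 0)
    (hsub : ∀ x, x ∈ (⨅ k, LieModule.lowerCentralSeries ℝ L L k) → x ∈ a) :
    ∀ x, x ∈ a ↔ x ∈ (⨅ k, LieModule.lowerCentralSeries ℝ L L k) := by
  refine fun x ↦ ⟨fun hx ↦ LieAlgebra.ker_iInf_lowerCentralSeries_le_of_center_eq_bot hcenter ?_,
    hsub x⟩
  exact (LieModule.mem_ker ℝ L _ x).mpr fun m ↦ Subtype.ext (haAb x hx m (hsub m m.2))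

/-- If a finite-dimensional real Lie algebra `𝔤` has trivial centre and the ideal
`𝔤^∞ := ⋂_{j≥1} 𝔤^j` is abelian, then `𝔤^∞` is a maximal abelian subalgebra of `𝔤`:
every abelian subalgebra containing `𝔤^∞` equals `𝔤^∞`. -/
theorem stmt3 (L : Type*) [LieRing L] [LieAlgebra ℝ L] [Module.Finite ℝ L]
    (hcenter : LieAlgebra.center ℝ L = ⊥)
    (habelian : ∀ x ∈ (⨅ k, LieModule.lowerCentralSeries ℝ L L k),
      ∀ y ∈ (⨅ k, LieModule.lowerCentralSeries ℝ L L k), ⁅x, y⁆ = 0)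
    (a : LieSubalgebra ℝ L) (haAb : ∀ x ∈ a, ∀ y ∈ a, ⁅x, y⁆ = 0)
    (hsub : ∀ x, x ∈ (⨅ k, LieModule.lowerCentralSeries ℝ L L k) → x ∈ a) :
    ∀ x, x ∈ a ↔ x ∈ (⨅ k, LieModule.lowerCentralSeries ℝ L L k) :=
  stmt3_general L hcenter a haAb hsub
end

section
/- Let 𝔤 be a finite-dimensional real Lie algebra with trivial centre such that the ideal 𝔤^∞ := ⋂_{j≥1} 𝔤^j is abelian, and let 𝔠 := { x ∈ 𝔤 : [x, y] = 0 for all y ∈ 𝔤^∞ } be the centralizer of 𝔤^∞ in 𝔤. Then for every nilpotent Lie subalgebra 𝔥 ⊆ 𝔤 with 𝔥 + 𝔤^∞ = 𝔤 one has 𝔥 ∩ 𝔠 = {0}. -/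
/-!
The elements of `H` centralizing `𝔤^∞` form an ideal of `H`, because `𝔤^∞` is an ideal of `𝔤`.
A nonzero ideal of the nilpotent Lie algebra `H` contains a nonzero element `z` of the centre
of `H`. Such a `z` commutes with `H` and with `𝔤^∞`, hence with `H + 𝔤^∞ = 𝔤`, so the triviality
of the centre of `𝔤` forces `z = 0`.
-/

namespace LieSubmodule

variable {R L M : Type*} [CommRing R] [LieRing L] [LieAlgebra R L]
  [AddCommGroup M] [Module R M] [LieRingModule L M] [LieModule R L M]

theorem exists_mem_maxTrivSubmodule_ne_zero [LieModule.IsNilpotent L M]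
    (N : LieSubmodule R L M) (hN : N ≠ ⊥) :
    ∃ m ∈ N, m ∈ LieModule.maxTrivSubmodule R L M ∧ m ≠ 0 := by
  have : Nontrivial N := (nontrivial_iff_ne_bot R L M).mpr hN
  have : LieModule.IsNilpotent L (⊤ : LieSubmodule R L M) :=
    LieModule.isNilpotent_of_top_iff'.mpr inferInstance
  have : LieModule.IsNilpotent L N := LieModule.isNilpotent_of_le R L M N ⊤ le_top
  have := LieModule.nontrivial_max_triv_of_isNilpotent R L N
  obtain ⟨⟨m, hm⟩, hm0⟩ := exists_ne (0 : LieModule.maxTrivSubmodule R L N)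
  refine ⟨m, m.2, fun x ↦ ?_, fun h ↦ hm0 ?_⟩
  · simpa using congrArg Subtype.val (hm x)
  · ext; simpa using h

end LieSubmodule

namespace LieIdeal

variable {R L : Type*} [CommRing R] [LieRing L] [LieAlgebra R L]

def centralizer (I : LieIdeal R L) : LieIdeal R L where
  carrier := {x | ∀ y ∈ I, ⁅x, y⁆ = 0}
  add_mem' hx hx' y hy := by rw [add_lie, hx y hy, hx' y hy, add_zero]
  zero_mem' y _ := zero_lie y
  smul_mem' t x hx y hy := by rw [smul_lie, hx y hy, smul_zero]
  lie_mem {z x} hx y hy := by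
    rw [lie_lie, hx y hy, lie_zero, zero_sub, neg_eq_zero]
    exact hx _ (I.lie_mem hy)

theorem mem_centralizer {I : LieIdeal R L} {x : L} :
    x ∈ I.centralizer ↔ ∀ y ∈ I, ⁅x, y⁆ = 0 :=
  Iff.rfl

end LieIdeal

theorem stmt5_general (L : Type*) [LieRing L] [LieAlgebra ℝ L]
    (hcenter : LieAlgebra.center ℝ L = ⊥)
    (H : LieSubalgebra ℝ L) (hHnilp : LieRing.IsNilpotent H)
    (hsum : ∀ x : L, ∃ h ∈ H, ∃ y ∈ (⨅ k, LieModule.lowerCentralSeries ℝ L L k), x = h + y) :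
    ∀ x ∈ H, (∀ y ∈ (⨅ k, LieModule.lowerCentralSeries ℝ L L k), ⁅x, y⁆ = 0) → x = 0 := by
  set I : LieIdeal ℝ L := ⨅ k, LieModule.lowerCentralSeries ℝ L L k
  intro x hxH hxI
  by_contra hx0
  have hN : I.centralizer.comap H.incl ≠ ⊥ := by
    rintro hbot
    have hxN : (⟨x, hxH⟩ : H) ∈ I.centralizer.comap H.incl :=
      LieIdeal.mem_comap.mpr (LieIdeal.mem_centralizer.mpr hxI)
    rw [hbot, LieSubmodule.mem_bot] at hxN
    exact hx0 (congrArg Subtype.val hxN)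
  obtain ⟨z, hzI, hzH, hz0⟩ := LieSubmodule.exists_mem_maxTrivSubmodule_ne_zero _ hN
  have hz : (z : L) ∈ LieAlgebra.center ℝ L := by
    refine (LieModule.mem_maxTrivSubmodule ℝ L L _).mpr fun g ↦ ?_
    obtain ⟨h, hh, y, hy, rfl⟩ := hsum g
    have hhz : ⁅h, (z : L)⁆ = 0 := congrArg Subtype.val (hzH ⟨h, hh⟩)
    have hzy : ⁅(z : L), y⁆ = 0 := LieIdeal.mem_centralizer.mp (LieIdeal.mem_comap.mp hzI) y hy
    rw [add_lie, hhz, ← lie_skew, hzy, neg_zero, zero_add]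
  rw [hcenter, LieSubmodule.mem_bot] at hz
  exact hz0 (Subtype.ext hz)

/-- Let `𝔤` be a finite-dimensional real Lie algebra with trivial centre whose ideal
`𝔤^∞ := ⋂_{j≥1} 𝔤^j` is abelian, and let `𝔠` be the centralizer of `𝔤^∞` in `𝔤`.
Then every nilpotent subalgebra `𝔥` with `𝔥 + 𝔤^∞ = 𝔤` satisfies `𝔥 ∩ 𝔠 = {0}`. -/
theorem stmt5 (L : Type*) [LieRing L] [LieAlgebra ℝ L] [Module.Finite ℝ L]
    (hcenter : LieAlgebra.center ℝ L = ⊥)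
    (habelian : ∀ x ∈ (⨅ k, LieModule.lowerCentralSeries ℝ L L k),
      ∀ y ∈ (⨅ k, LieModule.lowerCentralSeries ℝ L L k), ⁅x, y⁆ = 0)
    (H : LieSubalgebra ℝ L) (hHnilp : LieRing.IsNilpotent H)
    (hsum : ∀ x : L, ∃ h ∈ H, ∃ y ∈ (⨅ k, LieModule.lowerCentralSeries ℝ L L k), x = h + y) :
    ∀ x ∈ H, (∀ y ∈ (⨅ k, LieModule.lowerCentralSeries ℝ L L k), ⁅x, y⁆ = 0) → x = 0 :=
  stmt5_general L hcenter H hHnilp hsum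
end

section
/- Let 𝔤 be a finite-dimensional real Lie algebra with trivial centre such that the ideal 𝔤^∞ := ⋂_{j≥1} 𝔤^j is abelian, and let 𝔠 := { x ∈ 𝔤 : [x, y] = 0 for all y ∈ 𝔤^∞ } be the centralizer of 𝔤^∞ in 𝔤. Then there exists a nilpotent Lie subalgebra 𝔨 ⊆ 𝔤 with 𝔨 + 𝔤^∞ = 𝔤 and 𝔠 = (𝔠 ∩ 𝔨) + (𝔠 ∩ 𝔤^∞). -/
/-!
Take a Cartan subalgebra `𝔥` of `𝔤` as `𝔨`. The Fitting decomposition of `𝔤` under `𝔥` is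
`𝔤 = 𝔤₀ ⊕ 𝔤₁`, where `𝔤₀ = 𝔥` is the zero root space and `𝔤₁` is spanned by the subspaces
`⋂ₖ ad(x)ᵏ 𝔤`, `x ∈ 𝔥`; since `ad(x)ᵏ 𝔤 ⊆ 𝔤ᵏ⁺¹`, this gives `𝔤₁ ⊆ 𝔤^∞`. If `x = a + b` with
`a ∈ 𝔥`, `b ∈ 𝔤^∞` and `x` centralizes `𝔤^∞`, then so does `b` since `𝔤^∞` is abelian, hence so
does `a`.
-/

open LieModule

namespace LieModule

variable {R L M : Type*} [CommRing R] [LieRing L] [LieAlgebra R L]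
  [AddCommGroup M] [Module R M] [LieRingModule L M] [LieModule R L M]

lemma lowerCentralSeries_restrict_le (H : LieSubalgebra R L) (k : ℕ) :
    (lowerCentralSeries R H M k : Submodule R M) ≤ lowerCentralSeries R L M k := by
  induction k with
  | zero => simp
  | succ k ih =>
    simp only [lowerCentralSeries_succ, LieSubmodule.lieIdeal_oper_eq_linear_span]
    apply Submodule.span_mono
    rintro x ⟨⟨y, -⟩, ⟨z, hz⟩, rfl⟩
    exact ⟨⟨y.val, LieSubmodule.mem_top _⟩, ⟨z, ih hz⟩, rfl⟩

lemma posFittingComp_restrict_le_iInf_lowerCentralSeries (H : LieSubalgebra R L)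
    [LieRing.IsNilpotent H] :
    (posFittingComp R H M : Submodule R M) ≤
      (⨅ k, lowerCentralSeries R L M k : LieSubmodule R L M) := by
  intro m hm
  have hm' : m ∈ ⨅ k, lowerCentralSeries R H M k :=
    posFittingComp_le_iInf_lowerCentralSeries R H M hm
  simp only [LieSubmodule.mem_toSubmodule, LieSubmodule.mem_iInf] at hm' ⊢
  exact fun k ↦ lowerCentralSeries_restrict_le H k (hm' k)

end LieModule

lemma LieSubalgebra.IsCartanSubalgebra.toSubmodule_sup_iInf_lowerCentralSeries_eq_top
    {R L : Type*} [CommRing R] [LieRing L] [LieAlgebra R L] [IsNoetherian R L] [IsArtinian R L]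
    (H : LieSubalgebra R L) [H.IsCartanSubalgebra] :
    H.toSubmodule ⊔ (⨅ k, lowerCentralSeries R L L k : LieSubmodule R L L) = ⊤ := by
  have hfitting := congrArg LieSubmodule.toSubmodule
    (isCompl_genWeightSpace_zero_posFittingComp R H L).sup_eq_top
  rw [LieSubmodule.sup_toSubmodule, LieSubmodule.top_toSubmodule] at hfitting
  have hzero : (LieAlgebra.rootSpace H 0 : Submodule R L) = H.toSubmodule :=
    congrArg LieSubalgebra.toSubmodule (LieAlgebra.zeroRootSubalgebra_eq_of_is_cartan R L H)
  rw [eq_top_iff, ← hfitting, hzero]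
  exact sup_le_sup_left (posFittingComp_restrict_le_iInf_lowerCentralSeries H) _

theorem stmt6_general (L : Type*) [LieRing L] [LieAlgebra ℝ L] [Module.Finite ℝ L]
    (habelian : ∀ x ∈ (⨅ k, LieModule.lowerCentralSeries ℝ L L k),
      ∀ y ∈ (⨅ k, LieModule.lowerCentralSeries ℝ L L k), ⁅x, y⁆ = 0) :
    ∃ K : LieSubalgebra ℝ L, LieRing.IsNilpotent K ∧
      (∀ x : L, ∃ a ∈ K, ∃ b ∈ (⨅ k, LieModule.lowerCentralSeries ℝ L L k), x = a + b) ∧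
      (∀ x : L, (∀ y ∈ (⨅ k, LieModule.lowerCentralSeries ℝ L L k), ⁅x, y⁆ = 0) →
        ∃ a, ((∀ y ∈ (⨅ k, LieModule.lowerCentralSeries ℝ L L k), ⁅a, y⁆ = 0) ∧ a ∈ K) ∧
        ∃ b, ((∀ y ∈ (⨅ k, LieModule.lowerCentralSeries ℝ L L k), ⁅b, y⁆ = 0) ∧
          b ∈ (⨅ k, LieModule.lowerCentralSeries ℝ L L k)) ∧ x = a + b) := by
  obtain ⟨x₀, hx₀⟩ := LieAlgebra.exists_isCartanSubalgebra_engel ℝ L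
  set H := LieSubalgebra.engel ℝ x₀
  have hdecomp : ∀ x : L, ∃ a ∈ H, ∃ b ∈ (⨅ k, lowerCentralSeries ℝ L L k), x = a + b := by
    intro x
    obtain ⟨a, ha, b, hb, hab⟩ := Submodule.mem_sup.mp <|
      hx₀.toSubmodule_sup_iInf_lowerCentralSeries_eq_top ▸ Submodule.mem_top (x := x)
    exact ⟨a, ha, b, hb, hab.symm⟩
  refine ⟨H, inferInstance, hdecomp, fun x hx ↦ ?_⟩
  obtain ⟨a, ha, b, hb, rfl⟩ := hdecomp x
  have hb_central : ∀ y ∈ (⨅ k, lowerCentralSeries ℝ L L k), ⁅b, y⁆ = 0 := habelian b hb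
  have ha_central : ∀ y ∈ (⨅ k, lowerCentralSeries ℝ L L k), ⁅a, y⁆ = 0 := fun y hy ↦ by
    simpa [add_lie, hb_central y hy] using hx y hy
  exact ⟨a, ⟨ha_central, ha⟩, b, ⟨hb_central, hb⟩, rfl⟩

/-- Let `𝔤` be a finite-dimensional real Lie algebra with trivial centre whose ideal
`𝔤^∞ := ⋂_{j≥1} 𝔤^j` is abelian, and let `𝔠` be the centralizer of `𝔤^∞` in `𝔤`.
Then there is a nilpotent subalgebra `𝔨 ⊆ 𝔤` with `𝔨 + 𝔤^∞ = 𝔤` and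
`𝔠 = (𝔠 ∩ 𝔨) + (𝔠 ∩ 𝔤^∞)`. -/
theorem stmt6 (L : Type*) [LieRing L] [LieAlgebra ℝ L] [Module.Finite ℝ L]
    (hcenter : LieAlgebra.center ℝ L = ⊥)
    (habelian : ∀ x ∈ (⨅ k, LieModule.lowerCentralSeries ℝ L L k),
      ∀ y ∈ (⨅ k, LieModule.lowerCentralSeries ℝ L L k), ⁅x, y⁆ = 0) :
    ∃ K : LieSubalgebra ℝ L, LieRing.IsNilpotent K ∧
      (∀ x : L, ∃ a ∈ K, ∃ b ∈ (⨅ k, LieModule.lowerCentralSeries ℝ L L k), x = a + b) ∧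
      (∀ x : L, (∀ y ∈ (⨅ k, LieModule.lowerCentralSeries ℝ L L k), ⁅x, y⁆ = 0) →
        ∃ a, ((∀ y ∈ (⨅ k, LieModule.lowerCentralSeries ℝ L L k), ⁅a, y⁆ = 0) ∧ a ∈ K) ∧
        ∃ b, ((∀ y ∈ (⨅ k, LieModule.lowerCentralSeries ℝ L L k), ⁅b, y⁆ = 0) ∧
          b ∈ (⨅ k, LieModule.lowerCentralSeries ℝ L L k)) ∧ x = a + b) :=
  stmt6_general L habelian
end

section
/- Let 𝔤 be a finite-dimensional real Lie algebra with trivial centre. Then 𝔤 is metabelian if and only if there exist an abelian ideal 𝔫 ⊆ 𝔤 and an abelian Lie subalgebra 𝔞 ⊆ 𝔤 such that 𝔤 = 𝔫 ∔ 𝔞 (i.e. 𝔫 ∩ 𝔞 = {0} and 𝔫 + 𝔞 = 𝔤 as vector spaces). -/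
/-!
If `𝔤 = 𝔫 ∔ 𝔞` with `𝔫` an abelian ideal and `𝔞` abelian, then `𝔤/𝔫 ≅ 𝔞` is abelian, so
`[𝔤, 𝔤] ⊆ 𝔫` is abelian.

Conversely, let `𝔫 = [𝔤, 𝔤]` be abelian and let `𝔥` be a Cartan subalgebra. The Fitting
decomposition of `𝔤` under `𝔥` is `𝔤 = 𝔥 ⊕ 𝔤₁` with `𝔤₁ ⊆ [𝔥, 𝔤] ⊆ 𝔫`, so `𝔤 = 𝔫 + 𝔥`.
If `𝔥 ∩ 𝔫 ≠ 0`, the nilpotent algebra `𝔥` fixes a nonzero vector of this ideal of `𝔥`;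
that vector commutes with `𝔥` and with the abelian `𝔫`, hence is central. So `𝔥 ∩ 𝔫 = 0`
and `𝔥` is abelian, since `[𝔥, 𝔥] ⊆ 𝔥 ∩ 𝔫`.
-/

open LieAlgebra LieModule LieSubalgebra

namespace LieAlgebra

variable {R L : Type*} [CommRing R] [LieRing L] [LieAlgebra R L]

theorem derivedSeries_one_le_iff (I : LieIdeal R L) :
    derivedSeries R L 1 ≤ I ↔ ∀ x y : L, ⁅x, y⁆ ∈ I := by
  simp [derivedSeriesOfIdeal_succ, LieSubmodule.lie_le_iff]

theorem lie_mem_derivedSeries_one (x y : L) : ⁅x, y⁆ ∈ derivedSeries R L 1 :=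
  (derivedSeries_one_le_iff _).mp le_rfl x y

theorem derivedSeries_one_le_of_forall_eq_add {I : LieIdeal R L} {A : LieSubalgebra R L}
    (hA : ∀ x ∈ A, ∀ y ∈ A, ⁅x, y⁆ = 0) (hsum : ∀ x : L, ∃ y ∈ I, ∃ z ∈ A, x = y + z) :
    derivedSeries R L 1 ≤ I := by
  rw [derivedSeries_one_le_iff]
  intro x x'
  obtain ⟨y, hy, z, hz, rfl⟩ := hsum x
  obtain ⟨y', hy', z', hz', rfl⟩ := hsum x'
  have hyz' : ⁅y, z'⁆ ∈ I := by
    rw [← lie_skew]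
    exact neg_mem (I.lie_mem hy)
  rw [add_lie, lie_add, lie_add, hA z hz z' hz', add_zero]
  exact add_mem (add_mem (I.lie_mem hy') hyz') (I.lie_mem hy')

theorem posFittingComp_le_derivedSeries_one (H : LieSubalgebra R L) [LieRing.IsNilpotent H] :
    (posFittingComp R H L).toSubmodule ≤ (derivedSeries R L 1).toSubmodule := by
  have hlcs : (lowerCentralSeries R H L 1).toSubmodule ≤ (derivedSeries R L 1).toSubmodule := by
    rw [lowerCentralSeries_succ, LieSubmodule.lieIdeal_oper_eq_linear_span', Submodule.span_le]
    rintro _ ⟨x, -, y, -, rfl⟩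
    exact lie_mem_derivedSeries_one (x : L) y
  exact le_trans ((posFittingComp_le_iInf_lowerCentralSeries R H L).trans (iInf_le _ 1)) hlcs

theorem exists_mem_derivedSeries_one_add_mem_of_isCartanSubalgebra [IsNoetherian R L]
    [IsArtinian R L] (H : LieSubalgebra R L) [H.IsCartanSubalgebra] (x : L) :
    ∃ y ∈ derivedSeries R L 1, ∃ z ∈ H, x = y + z := by
  have hx : x ∈ rootSpace H 0 ⊔ posFittingComp R H L := by
    rw [(isCompl_genWeightSpace_zero_posFittingComp R H L).sup_eq_top]
    trivial
  obtain ⟨z, hz, y, hy, rfl⟩ := LieSubmodule.mem_sup _ _ _ |>.mp hx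
  rw [rootSpace_zero_eq, LieSubalgebra.mem_toLieSubmodule] at hz
  exact ⟨y, posFittingComp_le_derivedSeries_one H hy, z, hz, add_comm z y⟩

theorem mem_center_of_forall_lie_eq_zero {H : LieSubalgebra R L} {I : LieIdeal R L}
    (hI : ∀ x ∈ I, ∀ y ∈ I, ⁅x, y⁆ = 0) (hsum : ∀ x : L, ∃ y ∈ I, ∃ z ∈ H, x = y + z)
    {v : L} (hvI : v ∈ I) (hvH : ∀ z ∈ H, ⁅z, v⁆ = 0) : v ∈ center R L := by
  intro x
  obtain ⟨y, hy, z, hz, rfl⟩ := hsum x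
  rw [add_lie, hI y hy v hvI, hvH z hz, add_zero]

theorem eq_zero_of_mem_of_mem_of_center_eq_bot {H : LieSubalgebra R L} [LieRing.IsNilpotent H]
    {I : LieIdeal R L} (hI : ∀ x ∈ I, ∀ y ∈ I, ⁅x, y⁆ = 0)
    (hsum : ∀ x : L, ∃ y ∈ I, ∃ z ∈ H, x = y + z) (hcenter : center R L = ⊥)
    {x : L} (hxI : x ∈ I) (hxH : x ∈ H) : x = 0 := by
  by_contra hx
  let K : LieIdeal R H := I.comap H.incl
  have : Nontrivial K := ⟨⟨⟨⟨x, hxH⟩, hxI⟩, 0, fun h => hx congr($h.1.1)⟩⟩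
  have : IsNilpotent H K :=
    K.injective_incl.lieModuleIsNilpotent (f := LieHom.id) (g := (K.incl : K →ₗ[R] H))
      fun _ _ => rfl
  have := nontrivial_max_triv_of_isNilpotent R H K
  obtain ⟨v, hv⟩ := exists_ne (0 : maxTrivSubmodule R H K)
  have hcentral : (((v : K) : H) : L) ∈ center R L := by
    refine mem_center_of_forall_lie_eq_zero hI hsum (v : K).2 fun z hz => ?_
    exact congr($(v.2 ⟨z, hz⟩).1.1)
  rw [hcenter, LieSubmodule.mem_bot] at hcentral
  exact hv (by ext; exact hcentral)

end LieAlgebra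

/-- A finite-dimensional real Lie algebra `𝔤` with trivial centre is metabelian
if and only if it decomposes as `𝔤 = 𝔫 ∔ 𝔞` with `𝔫` an abelian ideal and `𝔞` an
abelian subalgebra. -/
theorem stmt7 (L : Type*) [LieRing L] [LieAlgebra ℝ L] [Module.Finite ℝ L]
    (hcenter : LieAlgebra.center ℝ L = ⊥) :
    (∀ x ∈ LieAlgebra.derivedSeries ℝ L 1, ∀ y ∈ LieAlgebra.derivedSeries ℝ L 1, ⁅x, y⁆ = 0) ↔
      ∃ (n : LieIdeal ℝ L) (a : LieSubalgebra ℝ L),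
        (∀ x ∈ n, ∀ y ∈ n, ⁅x, y⁆ = 0) ∧ (∀ x ∈ a, ∀ y ∈ a, ⁅x, y⁆ = 0) ∧
        (∀ x, x ∈ n → x ∈ a → x = 0) ∧ (∀ x : L, ∃ y ∈ n, ∃ z ∈ a, x = y + z) := by
  constructor
  · intro hab
    obtain ⟨x₀, hH⟩ := exists_isCartanSubalgebra_engel ℝ L
    have hsum := exists_mem_derivedSeries_one_add_mem_of_isCartanSubalgebra (engel ℝ x₀)
    have hdisj : ∀ x, x ∈ derivedSeries ℝ L 1 → x ∈ engel ℝ x₀ → x = 0 :=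
      fun _ => eq_zero_of_mem_of_mem_of_center_eq_bot hab hsum hcenter
    refine ⟨derivedSeries ℝ L 1, engel ℝ x₀, hab, fun x hx y hy => ?_, hdisj, hsum⟩
    exact hdisj _ (lie_mem_derivedSeries_one x y) ((engel ℝ x₀).lie_mem hx hy)
  · rintro ⟨n, a, hn, ha, -, hsum⟩ x hx y hy
    have hle := derivedSeries_one_le_of_forall_eq_add ha hsum
    exact hn x (hle hx) y (hle hy)
end

section
/- Let Γ be an arbitrary group. Then Γ is nilpotent if and only if there exists a normal subgroup N of Γ such that N is nilpotent and the quotient group Γ/[N,N] is nilpotent, where [N,N] denotes the commutator subgroup of N (which is normal in Γ since N is). -/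
/-!
Write `[A, _k G]` for `A` commutated `k` times with `G`, and `γᵢ(N)` for the lower central series
of `N`. If `G/[N,N]` is nilpotent, then `[N, _d G] ≤ [N,N]` for some `d`. By the three subgroups
lemma, `[[A,B], _k G]` lies in every normal subgroup containing all `[[A, _a G], [B, _b G]]` with
`a + b = k`. Taking `A = γᵢ(N)`, `B = N` and using `[γᵢ(N), [N,N]] ≤ γᵢ₊₂(N)`, an inclusion
`[γᵢ(N), _m G] ≤ γᵢ₊₁(N)` yields `[γᵢ₊₁(N), _(m+d) G] ≤ γᵢ₊₂(N)`. Hence every `γᵢ(N)` contains a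
term of the lower central series of `G`, and `γ_c(N) = 1` for some `c`.
-/

open Subgroup QuotientGroup

namespace Subgroup

variable {G : Type*} [Group G]

theorem commutator_commutator_le_of_rotate {H₁ H₂ H₃ L : Subgroup G} [L.Normal]
    (h1 : ⁅⁅H₂, H₃⁆, H₁⁆ ≤ L) (h2 : ⁅⁅H₃, H₁⁆, H₂⁆ ≤ L) : ⁅⁅H₁, H₂⁆, H₃⁆ ≤ L := by
  have key (A B : Subgroup G) : ⁅A, B⁆ ≤ L ↔ ⁅A.map (mk' L), B.map (mk' L)⁆ = ⊥ := by
    rw [← map_commutator, map_eq_bot_iff, ker_mk']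
  rw [key, map_commutator] at h1 h2 ⊢
  exact commutator_commutator_eq_bot_of_rotate h1 h2

instance upperCentralSeriesStep_normal (X : Subgroup G) [X.Normal] :
    (upperCentralSeriesStep X).Normal := by
  rw [upperCentralSeriesStep_eq_comap_center]
  infer_instance

theorem commutator_top_le_iff {K X : Subgroup G} [X.Normal] :
    ⁅K, ⊤⁆ ≤ X ↔ K ≤ upperCentralSeriesStep X :=
  commutator_le.trans ⟨fun h g hg y => h g hg y (mem_top y), fun h _ hg y _ => h hg y⟩

def commutatorTop (H : Subgroup G) : Subgroup G := ⁅H, ⊤⁆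

theorem commutatorTop_mono : Monotone (commutatorTop (G := G)) :=
  fun _ _ h => commutator_mono h le_rfl

instance commutatorTop_iterate_normal (A : Subgroup G) [A.Normal] (k : ℕ) :
    (commutatorTop^[k] A).Normal := by
  induction k with
  | zero => assumption
  | succ k _ => rw [Function.iterate_succ_apply']; exact commutator_normal _ _

theorem commutatorTop_iterate_antitone (A : Subgroup G) [A.Normal] :
    Antitone (commutatorTop^[·] A) :=
  antitone_nat_of_succ_le fun k => by
    rw [Function.iterate_succ_apply']; exact commutator_le_left _ _

theorem commutatorTop_iterate_top (k : ℕ) :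
    commutatorTop^[k] ⊤ = (⊤ : Subgroup G).lowerCentralSeries k := by
  induction k with
  | zero => rfl
  | succ k ih => rw [Function.iterate_succ_apply', ih]; rfl

theorem commutatorTop_iterate_commutator_le {A B X : Subgroup G} [A.Normal] [B.Normal] [X.Normal]
    {k : ℕ} (h : ∀ a b, a + b = k → ⁅commutatorTop^[a] A, commutatorTop^[b] B⁆ ≤ X) :
    commutatorTop^[k] ⁅A, B⁆ ≤ X := by
  -- The step replaces `X` by the preimage of the centre of `G ⧸ X` and uses three subgroups.
  induction k generalizing X with
  | zero => exact h 0 0 rfl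
  | succ k ih =>
    rw [Function.iterate_succ_apply', commutatorTop, commutator_top_le_iff]
    refine ih fun a b hab => commutator_top_le_iff.mp (commutator_commutator_le_of_rotate ?_ ?_)
    · have h' := h a (b + 1) (by omega)
      rw [Function.iterate_succ_apply', commutatorTop] at h'
      rwa [commutator_comm]
    · have h' := h (a + 1) b (by omega)
      rw [Function.iterate_succ_apply', commutatorTop] at h'
      rwa [commutator_comm ⊤]

theorem commutator_lowerCentralSeries_commutator_le (N : Subgroup G) [N.Normal] (i : ℕ) :
    ⁅N.lowerCentralSeries i, ⁅N, N⁆⁆ ≤ N.lowerCentralSeries (i + 2) := by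
  rw [commutator_comm]
  refine commutator_commutator_le_of_rotate ?_ le_rfl
  rw [commutator_comm N]
  rfl

theorem exists_commutatorTop_iterate_lowerCentralSeries_le {N : Subgroup G} [N.Normal] {d : ℕ}
    (hd : commutatorTop^[d] N ≤ ⁅N, N⁆) (i : ℕ) :
    ∃ m, commutatorTop^[m] (N.lowerCentralSeries i) ≤ N.lowerCentralSeries (i + 1) := by
  induction i with
  | zero => exact ⟨d, hd⟩
  | succ i ih =>
    obtain ⟨m, hm⟩ := ih
    refine ⟨m + d, commutatorTop_iterate_commutator_le fun a b hab => ?_⟩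
    rcases le_or_gt m a with ha | hb
    · calc ⁅commutatorTop^[a] (N.lowerCentralSeries i), commutatorTop^[b] N⁆
          ≤ ⁅N.lowerCentralSeries (i + 1), N⁆ :=
            commutator_mono ((commutatorTop_iterate_antitone _ ha).trans hm)
              (commutatorTop_iterate_antitone N (Nat.zero_le b))
        _ = N.lowerCentralSeries (i + 2) := rfl
    · calc ⁅commutatorTop^[a] (N.lowerCentralSeries i), commutatorTop^[b] N⁆
          ≤ ⁅N.lowerCentralSeries i, ⁅N, N⁆⁆ :=
            commutator_mono (commutatorTop_iterate_antitone _ (Nat.zero_le a))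
              ((commutatorTop_iterate_antitone N (by omega : d ≤ b)).trans hd)
        _ ≤ N.lowerCentralSeries (i + 2) := commutator_lowerCentralSeries_commutator_le N i

theorem exists_lowerCentralSeries_le_lowerCentralSeries {N : Subgroup G} [N.Normal] {d : ℕ}
    (hd : (⊤ : Subgroup G).lowerCentralSeries d ≤ ⁅N, N⁆) (i : ℕ) :
    ∃ e, (⊤ : Subgroup G).lowerCentralSeries e ≤ N.lowerCentralSeries i := by
  have hdN : commutatorTop^[d] N ≤ ⁅N, N⁆ :=
    (commutatorTop_mono.iterate d le_top).trans ((commutatorTop_iterate_top d).trans_le hd)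
  induction i with
  | zero => exact ⟨d, hd.trans (commutator_le_right N N)⟩
  | succ i ih =>
    obtain ⟨e, he⟩ := ih
    obtain ⟨m, hm⟩ := exists_commutatorTop_iterate_lowerCentralSeries_le hdN i
    refine ⟨m + e, ?_⟩
    rw [← commutatorTop_iterate_top, Function.iterate_add_apply, commutatorTop_iterate_top]
    exact (commutatorTop_mono.iterate m he).trans hm

theorem exists_lowerCentralSeries_le_of_isNilpotent_quotient {N : Subgroup G} [N.Normal]
    (h : Group.IsNilpotent (G ⧸ N)) : ∃ d, (⊤ : Subgroup G).lowerCentralSeries d ≤ N := by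
  obtain ⟨d, hd⟩ := nilpotent_iff_lowerCentralSeries.mp h
  refine ⟨d, ?_⟩
  rw [← ker_mk' N, ← map_eq_bot_iff, map_lowerCentralSeries,
    map_top_of_surjective _ (mk'_surjective N), hd]

theorem isNilpotent_of_isNilpotent_of_isNilpotent_quotient_commutator (N : Subgroup G) [N.Normal]
    (hN : Group.IsNilpotent N) (hQ : Group.IsNilpotent (G ⧸ ⁅N, N⁆)) : Group.IsNilpotent G := by
  obtain ⟨c, hc⟩ := (isNilpotent_iff_lowerCentralSeries N).mp hN
  obtain ⟨d, hd⟩ := exists_lowerCentralSeries_le_of_isNilpotent_quotient hQ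
  obtain ⟨e, he⟩ := exists_lowerCentralSeries_le_lowerCentralSeries hd c
  exact nilpotent_iff_lowerCentralSeries.mpr ⟨e, le_bot_iff.mp (hc ▸ he)⟩

end Subgroup

/-- P. Hall's criterion: a group `Γ` is nilpotent if and only if it has a normal
subgroup `N` such that both `N` and `Γ/[N,N]` are nilpotent. -/
theorem stmt9 (Γ : Type*) [Group Γ] :
    Group.IsNilpotent Γ ↔
      ∃ (N : Subgroup Γ) (hN : N.Normal),
        Group.IsNilpotent ↥N ∧
          (haveI := hN; Group.IsNilpotent (Γ ⧸ (⁅N, N⁆ : Subgroup Γ))) := by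
  constructor
  · intro _
    exact ⟨⊥, inferInstance, inferInstance, Group.nilpotent_of_surjective _ (mk'_surjective _)⟩
  · rintro ⟨N, hN, hNil, hQ⟩
    exact isNilpotent_of_isNilpotent_of_isNilpotent_quotient_commutator N hNil hQ
end

section
/- Let 𝔤 be a finite-dimensional real Lie algebra. Then 𝔤 is nilpotent if and only if there exists an ideal 𝔫 ⊆ 𝔤 such that both 𝔫 and the quotient Lie algebra 𝔤/[𝔫,𝔫] are nilpotent, where [𝔫,𝔫] denotes the derived ideal of 𝔫 (which is an ideal of 𝔤 since 𝔫 is). -/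
/-!
This is the Lie algebra analogue of P. Hall's nilpotency criterion. Write `γⱼ = ⁅n, ⁅n, …, ⁅n, L⁆⁆⁆`
(`j` brackets). Nilpotency of `L ⧸ ⁅n, n⁆` means that some term `Lᵏ` of the lower central series
of `L` lies in `⁅n, n⁆`. By induction on `j`, `L` acts nilpotently on `γⱼ ⧸ γⱼ₊₁`: by the Leibniz
rule, long iterated brackets of `L` with `γⱼ₊₁ = ⁅n, γⱼ⁆` are sums of brackets `⁅Lˢ n, Lᵗ γⱼ⁆`, which
lie in `⁅⁅n, n⁆, γⱼ⁆ ≤ γⱼ₊₂` once `s ≥ k`, and in `⁅n, γⱼ₊₁⁆ = γⱼ₊₂` once `t` is large. Nilpotency of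
`n` makes some `γ_c` vanish, so the lower central series of `L` reaches `0`. Here `Lˢ X` denotes
the `s`-fold bracket `⁅L, ⁅L, …, ⁅L, X⁆⁆⁆`, i.e. `LieSubmodule.lcs s X`.
-/

open LieModule

namespace LieSubmodule

variable {R L M : Type*} [CommRing R] [LieRing L] [LieAlgebra R L]
  [AddCommGroup M] [Module R M] [LieRingModule L M]

theorem lcs_add (N : LieSubmodule R L M) (a b : ℕ) : N.lcs (a + b) = (N.lcs b).lcs a :=
  Function.iterate_add_apply _ a b N

variable [LieModule R L M]

theorem lcs_mono (k : ℕ) : Monotone (lcs k : LieSubmodule R L M → LieSubmodule R L M) :=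
  (gc_lcs_ucs k).monotone_l

theorem lie_lie_le (I J : LieIdeal R L) (N : LieSubmodule R L M) :
    ⁅I, ⁅J, N⁆⁆ ≤ ⁅⁅I, J⁆, N⁆ ⊔ ⁅J, ⁅I, N⁆⁆ := by
  rw [lie_le_iff]
  intro x hx m hm
  rw [← mem_toSubmodule, lieIdeal_oper_eq_linear_span'] at hm
  induction hm using Submodule.span_induction with
  | mem _ hm =>
    obtain ⟨y, hy, n, hn, rfl⟩ := hm
    rw [leibniz_lie x y n]
    exact add_mem (mem_sup_left (lie_mem_lie (lie_mem_lie hx hy) hn))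
      (mem_sup_right (lie_mem_lie hy (lie_mem_lie hx hn)))
  | zero => simp
  | add _ _ _ _ h₁ h₂ => rw [lie_add]; exact add_mem h₁ h₂
  | smul t _ _ h => rw [lie_smul]; exact SMulMemClass.smul_mem t h

theorem lcs_lie_le {I : LieIdeal R L} {N T : LieSubmodule R L M} {m : ℕ}
    (h : ∀ s t, s + t = m → ⁅lcs s I, lcs t N⁆ ≤ T) : lcs m ⁅I, N⁆ ≤ T := by
  suffices ∀ i s t, s + t + i = m → lcs i ⁅lcs s I, lcs t N⁆ ≤ T from this m 0 0 (by omega)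
  intro i
  induction i with
  | zero => intro s t hst; exact h s t hst
  | succ i ih =>
    intro s t hst
    calc lcs (i + 1) ⁅lcs s I, lcs t N⁆ = lcs i ⁅(⊤ : LieIdeal R L), ⁅lcs s I, lcs t N⁆⁆ :=
          Function.iterate_succ_apply _ i _
      _ ≤ lcs i ⁅lcs (s + 1) I, lcs t N⁆ ⊔ lcs i ⁅lcs s I, lcs (t + 1) N⁆ := by
          rw [← lcs_sup, lcs_succ, lcs_succ]
          exact lcs_mono i (lie_lie_le _ _ _)
      _ ≤ T := sup_le (ih _ _ (by omega)) (ih _ _ (by omega))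

end LieSubmodule

namespace LieIdeal

variable {R L : Type*} [CommRing R] [LieRing L] [LieAlgebra R L]

theorem isNilpotent_quotient_iff (I : LieIdeal R L) :
    LieRing.IsNilpotent (L ⧸ I) ↔ ∃ k, lowerCentralSeries R L L k ≤ I := by
  rw [LieRing.IsNilpotent, LieModule.isNilpotent_iff R, ← LieModule.isNilpotent_quotient_iff,
    LieModule.isNilpotent_iff R]
  simp only [← LieSubmodule.toSubmodule_inj, coe_lowerCentralSeries_ideal_quot_eq]
  exact Iff.rfl

theorem coe_lcs_succ_le_map_lowerCentralSeries (n : LieIdeal R L) (k : ℕ) :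
    LieSubmodule.toSubmodule (n.lcs L (k + 1)) ≤
      (LieSubmodule.toSubmodule (lowerCentralSeries R n n k)).map (n.incl : n →ₗ[R] L) := by
  induction k with
  | zero =>
    intro x hx
    exact ⟨⟨x, LieSubmodule.lie_le_left n ⊤ hx⟩, LieSubmodule.mem_top _, rfl⟩
  | succ k ih =>
    rw [lcs_succ, LieSubmodule.lieIdeal_oper_eq_linear_span', Submodule.span_le]
    rintro _ ⟨x, hx, m, hm, rfl⟩
    obtain ⟨m', hm', rfl⟩ := ih hm
    refine ⟨⁅(⟨x, hx⟩ : n), m'⁆, ?_, rfl⟩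
    rw [SetLike.mem_coe, LieSubmodule.mem_toSubmodule, lowerCentralSeries_succ]
    exact LieSubmodule.lie_mem_lie (LieSubmodule.mem_top _) hm'

theorem exists_lcs_eq_bot (n : LieIdeal R L) [LieRing.IsNilpotent n] : ∃ c, n.lcs L c = ⊥ := by
  obtain ⟨c, hc⟩ := LieModule.IsNilpotent.nilpotent R n n
  refine ⟨c + 1, ?_⟩
  rw [← LieSubmodule.toSubmodule_eq_bot, ← le_bot_iff]
  simpa [hc] using coe_lcs_succ_le_map_lowerCentralSeries n c

theorem exists_lcs_lcs_le_lcs_succ (n : LieIdeal R L) {k : ℕ}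
    (hk : lowerCentralSeries R L L k ≤ ⁅n, n⁆) (j : ℕ) :
    ∃ N, LieSubmodule.lcs N (n.lcs L j) ≤ n.lcs L (j + 1) := by
  induction j with
  | zero => exact ⟨k, hk.trans (LieSubmodule.mono_lie_right n le_top)⟩
  | succ j ih =>
    obtain ⟨N, hN⟩ := ih
    simp only [lcs_succ] at hN ⊢
    set E := n.lcs L j
    have jacobi : ⁅⁅n, n⁆, E⁆ ≤ ⁅n, ⁅n, E⁆⁆ :=
      calc ⁅⁅n, n⁆, E⁆ = ⁅E, ⁅n, n⁆⁆ := LieSubmodule.lie_comm _ _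
        _ ≤ ⁅⁅E, n⁆, n⁆ ⊔ ⁅n, ⁅E, n⁆⁆ := LieSubmodule.lie_lie_le _ _ _
        _ = ⁅n, ⁅n, E⁆⁆ := by rw [LieSubmodule.lie_comm E n, LieSubmodule.lie_comm _ n, sup_idem]
    refine ⟨N + k, LieSubmodule.lcs_lie_le fun s t hst => ?_⟩
    by_cases hs : k ≤ s
    · calc ⁅LieSubmodule.lcs s n, LieSubmodule.lcs t E⁆ ≤ ⁅⁅n, n⁆, E⁆ := by
            refine LieSubmodule.mono_lie ?_ (LieSubmodule.lcs_le_self _ _)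
            exact (LieSubmodule.lcs_mono s le_top).trans
              ((antitone_lowerCentralSeries R L L hs).trans hk)
        _ ≤ ⁅n, ⁅n, E⁆⁆ := jacobi
    · have hE : LieSubmodule.lcs t E ≤ ⁅n, E⁆ := by
        rw [show t = (t - N) + N by omega, LieSubmodule.lcs_add]
        exact (LieSubmodule.lcs_le_self _ _).trans hN
      exact LieSubmodule.mono_lie (LieSubmodule.lcs_le_self _ _) hE

theorem isNilpotent_of_quotient_lie_self (n : LieIdeal R L) [LieRing.IsNilpotent n]
    (h : LieRing.IsNilpotent (L ⧸ ⁅n, n⁆)) : LieRing.IsNilpotent L := by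
  obtain ⟨k, hk⟩ := (isNilpotent_quotient_iff _).1 h
  obtain ⟨c, hc⟩ := n.exists_lcs_eq_bot
  suffices ∀ j, ∃ M, lowerCentralSeries R L L M ≤ n.lcs L j by
    obtain ⟨M, hM⟩ := this c
    exact LieModule.IsNilpotent.mk (M := L) (le_bot_iff.1 (hc ▸ hM))
  intro j
  induction j with
  | zero => exact ⟨0, le_top⟩
  | succ j ih =>
    obtain ⟨M, hM⟩ := ih
    obtain ⟨N, hN⟩ := exists_lcs_lcs_le_lcs_succ n hk j
    exact ⟨N + M, (LieSubmodule.lcs_add ⊤ N M).trans_le ((LieSubmodule.lcs_mono N hM).trans hN)⟩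

end LieIdeal

theorem stmt10_general (L : Type*) [LieRing L] [LieAlgebra ℝ L] :
    LieRing.IsNilpotent L ↔
      ∃ n : LieIdeal ℝ L, LieRing.IsNilpotent ↥n ∧
        LieRing.IsNilpotent (L ⧸ (⁅n, n⁆ : LieIdeal ℝ L)) := by
  refine ⟨fun h => ⟨⊥, inferInstance, ?_⟩, fun ⟨n, _, h⟩ => n.isNilpotent_of_quotient_lie_self h⟩
  obtain ⟨k, hk⟩ := LieModule.IsNilpotent.nilpotent ℝ L L
  exact (LieIdeal.isNilpotent_quotient_iff _).2 ⟨k, hk.le.trans bot_le⟩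

/-- A finite-dimensional real Lie algebra `𝔤` is nilpotent if and only if there is an
ideal `𝔫 ⊆ 𝔤` such that both `𝔫` and `𝔤/[𝔫,𝔫]` are nilpotent Lie algebras. -/
theorem stmt10 (L : Type*) [LieRing L] [LieAlgebra ℝ L] [Module.Finite ℝ L] :
    LieRing.IsNilpotent L ↔
      ∃ n : LieIdeal ℝ L, LieRing.IsNilpotent ↥n ∧
        LieRing.IsNilpotent (L ⧸ (⁅n, n⁆ : LieIdeal ℝ L)) :=
  stmt10_general L
end

section
/- Let V be a nonzero finite-dimensional real vector space and T : V → V a linear endomorphism. Then T is nilpotent if and only if for every t ∈ ℝ the complex spectrum of the complexification of the exponential exp(tT) is contained in {1} (equivalently, every complex eigenvalue of exp(tT) equals 1 for every t ∈ ℝ). -/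
/-!
If `T` is nilpotent then so is `t • T`, and `exp (t • T) - 1` is nilpotent, so `exp (t • T)` is
unipotent and its spectrum is `{1}`. Conversely, replace `T` by its matrix `M` in a basis, viewed
over `ℂ`: this intertwines `exp` and computes the spectrum of the complexification. For an
eigenvalue `z` of `M` the spectral mapping inclusion gives `exp (t z) ∈ σ (exp (t M)) ⊆ {1}` for
all real `t`, and differentiating at `t = 0` forces `z = 0`. A complex matrix with spectrum in `{0}`
has characteristic polynomial `X ^ n`, hence is nilpotent by Cayley–Hamilton.
-/

open NormedSpace Polynomial

theorem spectrum_subset_singleton_of_isNilpotent_sub {𝕜 A : Type*} [Field 𝕜] [Ring A]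
    [Algebra 𝕜 A] {a : A} {r : 𝕜} (h : IsNilpotent (a - algebraMap 𝕜 A r)) :
    spectrum 𝕜 a ⊆ {r} := by
  intro μ hμ
  by_contra hne
  refine spectrum.notMem_iff.mpr ?_ hμ
  have hsplit : algebraMap 𝕜 A μ - a = -(a - algebraMap 𝕜 A r) + algebraMap 𝕜 A (μ - r) := by
    rw [map_sub]; abel
  rw [hsplit]
  exact h.neg.isUnit_add_right_of_commute
    ((isUnit_iff_ne_zero.mpr (sub_ne_zero.mpr hne)).map _) (Algebra.commute_algebraMap_right _ _)

namespace NormedSpace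

section TopologicalAlgebra

variable {A : Type*} [Ring A] [Algebra ℚ A] [TopologicalSpace A] [IsTopologicalRing A]

theorem exp_eq_isNilpotent_exp {a : A} (ha : IsNilpotent a) : exp a = IsNilpotent.exp a := by
  obtain ⟨k, hk⟩ := ha
  rw [exp_eq_tsum_rat, IsNilpotent.exp_eq_sum hk]
  exact tsum_eq_sum fun n hn ↦ by rw [pow_eq_zero_of_le (by simpa using hn) hk, smul_zero]

theorem isNilpotent_exp_sub_one {a : A} (ha : IsNilpotent a) : IsNilpotent (exp a - 1) :=
  exp_eq_isNilpotent_exp ha ▸ IsNilpotent.isNilpotent_exp_sub_one ha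

theorem spectrum_exp_subset_one_of_isNilpotent {𝕜 : Type*} [Field 𝕜] [Algebra 𝕜 A] {a : A}
    (ha : IsNilpotent a) : spectrum 𝕜 (exp a) ⊆ {1} :=
  spectrum_subset_singleton_of_isNilpotent_sub (by simpa using isNilpotent_exp_sub_one ha)

end TopologicalAlgebra

theorem map_exp_of_continuous {𝕂 A B F : Type*} [RCLike 𝕂] [NormedRing A] [NormedAlgebra 𝕂 A]
    [CompleteSpace A] [Ring B] [Algebra 𝕂 B] [TopologicalSpace B] [IsTopologicalRing B]
    [T2Space B] [FunLike F A B] [RingHomClass F A B] (f : F) (hf : Continuous f) (x : A) :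
    f (exp x) = exp (f x) := by
  rw [exp_eq_tsum 𝕂, exp_eq_tsum 𝕂]
  refine ((expSeries_summable' (𝕂 := 𝕂) x).hasSum.map f hf).tsum_eq.symm.trans ?_
  simp_rw [Function.comp_def, map_inv_natCast_smul f 𝕂 𝕂, map_pow]

end NormedSpace

theorem Complex.eq_zero_of_forall_exp_ofReal_mul_eq_one {z : ℂ}
    (h : ∀ t : ℝ, Complex.exp (t * z) = 1) : z = 0 := by
  have hderiv : HasDerivAt (fun t : ℝ ↦ Complex.exp (t * z)) z 0 := by
    simpa using ((hasDerivAt_id (0 : ℝ)).ofReal_comp.mul_const z).cexp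
  rw [funext h] at hderiv
  exact hderiv.unique (hasDerivAt_const 0 1)

theorem spectrum_subset_zero_of_forall_spectrum_exp_smul_subset_one {A : Type*} [NormedRing A]
    [NormedAlgebra ℂ A] [CompleteSpace A] {a : A}
    (h : ∀ t : ℝ, spectrum ℂ (exp ((t : ℂ) • a)) ⊆ {1}) : spectrum ℂ a ⊆ {0} := by
  intro z hz
  refine Complex.eq_zero_of_forall_exp_ofReal_mul_eq_one fun t ↦ ?_
  rcases eq_or_ne (t : ℂ) 0 with ht | ht
  · simp [ht]
  have hmem : (t : ℂ) * z ∈ spectrum ℂ ((t : ℂ) • a) :=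
    spectrum.smul_mem_smul_iff (r := Units.mk0 _ ht) |>.mpr hz
  rw [Complex.exp_eq_exp_ℂ]
  exact h t (spectrum.exp_mem_exp _ hmem)

theorem Polynomial.Splits.eq_X_pow_of_forall_mem_roots_eq_zero {K : Type*} [Field K] {p : K[X]}
    (hs : p.Splits) (hm : p.Monic) (h : ∀ x ∈ p.roots, x = 0) : p = X ^ p.roots.card := by
  conv_lhs => rw [hs.eq_prod_roots_of_monic hm, Multiset.eq_replicate_card.mpr h]
  simp

namespace Matrix

variable {ι : Type*} [Fintype ι] [DecidableEq ι]

theorem isNilpotent_iff_spectrum_subset_zero {K : Type*} [Field K] [IsAlgClosed K]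
    (M : Matrix ι ι K) : IsNilpotent M ↔ spectrum K M ⊆ {0} := by
  refine ⟨fun hM ↦ spectrum_subset_singleton_of_isNilpotent_sub (by simpa using hM), fun hM ↦ ?_⟩
  have hX := (IsAlgClosed.splits M.charpoly).eq_X_pow_of_forall_mem_roots_eq_zero
    M.charpoly_monic fun x hx ↦ hM (M.mem_spectrum_iff_isRoot_charpoly.mpr (isRoot_of_mem_roots hx))
  have hCH := M.aeval_self_charpoly
  rw [hX] at hCH
  exact ⟨_, by simpa using hCH⟩

theorem isNilpotent_iff_forall_spectrum_exp_smul_subset_one (M : Matrix ι ι ℂ) :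
    IsNilpotent M ↔ ∀ t : ℝ, spectrum ℂ (exp ((t : ℂ) • M)) ⊆ {1} := by
  refine ⟨fun hM t ↦ spectrum_exp_subset_one_of_isNilpotent (hM.smul _), fun h ↦ ?_⟩
  open scoped Matrix.Norms.Operator in
  exact M.isNilpotent_iff_spectrum_subset_zero.mpr
    (spectrum_subset_zero_of_forall_spectrum_exp_smul_subset_one h)

end Matrix

theorem LinearMap.spectrum_baseChange {R A M ι : Type*} [CommRing R] [CommRing A] [Algebra R A]
    [AddCommGroup M] [Module R M] [Fintype ι] [DecidableEq ι] (b : Module.Basis ι R M)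
    (f : M →ₗ[R] M) :
    spectrum A (f.baseChange A) = spectrum A ((toMatrix b b f).map (algebraMap R A)) := by
  rw [← spectrum_toMatrix _ (Algebra.TensorProduct.basis A b), toMatrix_baseChange]

namespace ContinuousLinearMap

variable {V ι : Type*} [NormedAddCommGroup V] [NormedSpace ℝ V] [Fintype ι] [DecidableEq ι]

noncomputable def toComplexMatrixAlgHom (b : Module.Basis ι ℝ V) :
    (V →L[ℝ] V) →ₐ[ℝ] Matrix ι ι ℂ :=
  (Algebra.ofId ℝ ℂ).mapMatrix.comp <| (LinearMap.toMatrixAlgEquiv b).toAlgHom.comp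
    { toLinearMapRingHom with commutes' := fun _ ↦ rfl }

theorem toComplexMatrixAlgHom_apply (b : Module.Basis ι ℝ V) (f : V →L[ℝ] V) :
    toComplexMatrixAlgHom b f = (LinearMap.toMatrix b b f).map (algebraMap ℝ ℂ) :=
  rfl

theorem toComplexMatrixAlgHom_injective (b : Module.Basis ι ℝ V) :
    Function.Injective (toComplexMatrixAlgHom b) :=
  (Matrix.map_injective (algebraMap ℝ ℂ).injective).comp <|
    (LinearMap.toMatrixAlgEquiv b).injective.comp coe_injective

theorem continuous_toComplexMatrixAlgHom [FiniteDimensional ℝ V] (b : Module.Basis ι ℝ V) :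
    Continuous (toComplexMatrixAlgHom b) :=
  (toComplexMatrixAlgHom b).toLinearMap.continuous_of_finiteDimensional

end ContinuousLinearMap

open ContinuousLinearMap in
theorem stmt12_general (V : Type*) [NormedAddCommGroup V] [NormedSpace ℝ V]
    [FiniteDimensional ℝ V] (T : V →L[ℝ] V) :
    IsNilpotent T ↔
      ∀ t : ℝ, spectrum ℂ
        (LinearMap.baseChange ℂ ((NormedSpace.exp (t • T)).toLinearMap)) ⊆ {1} := by
  let b := Module.finBasis ℝ V
  have hspec (t : ℝ) : spectrum ℂ (LinearMap.baseChange ℂ (exp (t • T)).toLinearMap) =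
      spectrum ℂ (exp ((t : ℂ) • toComplexMatrixAlgHom b T)) := by
    rw [LinearMap.spectrum_baseChange b, ← toComplexMatrixAlgHom_apply,
      map_exp_of_continuous (𝕂 := ℝ) _ (continuous_toComplexMatrixAlgHom b), map_smul,
      Complex.coe_smul]
  simp_rw [hspec, ← Matrix.isNilpotent_iff_forall_spectrum_exp_smul_subset_one,
    IsNilpotent.map_iff (toComplexMatrixAlgHom_injective b)]

/-- A linear endomorphism `T` of a nonzero finite-dimensional real vector space is
nilpotent if and only if, for every `t ∈ ℝ`, the complex spectrum of the
complexification of `exp (t • T)` is contained in `{1}`. -/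
theorem stmt12 (V : Type*) [NormedAddCommGroup V] [NormedSpace ℝ V]
    [FiniteDimensional ℝ V] [Nontrivial V] (T : V →L[ℝ] V) :
    IsNilpotent T ↔
      ∀ t : ℝ, spectrum ℂ
        (LinearMap.baseChange ℂ ((NormedSpace.exp (t • T)).toLinearMap)) ⊆ {1} :=
  stmt12_general V T
end

section
/- Let X be a connected topological space and suppose there exist topological spaces X₁ and X₂, each containing at least two points, such that X is homeomorphic to X₁ × X₂ (with the product topology). Then for every point x ∈ X the complement X \ {x} is connected. -/
open Set

lemma prod_compl_singleton_connected {X₁ X₂ : Type*} [TopologicalSpace X₁]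
    [TopologicalSpace X₂] [ConnectedSpace X₁] [ConnectedSpace X₂]
    {a a' : X₁} {b b' : X₂} (ha : a' ≠ a) (hb : b' ≠ b) :
    IsConnected ({(a, b)}ᶜ : Set (X₁ × X₂)) := by
  classical
  set K : Set (X₁ × X₂) := ({a'} ×ˢ univ) ∪ (univ ×ˢ {b'}) with hK
  have hconn : ∀ (c : X₁), IsConnected (({c} ×ˢ (univ : Set X₂)) ∪ (univ ×ˢ {b'})) := by
    intro c
    exact IsConnected.union ⟨(c, b'), by simp⟩
      ((isConnected_singleton).prod isConnected_univ)
      (isConnected_univ.prod isConnected_singleton)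
  have hconn' : ∀ (d : X₂), IsConnected (({a'} ×ˢ (univ : Set X₂)) ∪ (univ ×ˢ {d})) := by
    intro d
    exact IsConnected.union ⟨(a', d), by simp⟩
      ((isConnected_singleton).prod isConnected_univ)
      (isConnected_univ.prod isConnected_singleton)
  set f : X₁ ⊕ X₂ → Set (X₁ × X₂) := fun i =>
    match i with
    | Sum.inl c => if c = a then K else ({c} ×ˢ univ) ∪ (univ ×ˢ {b'})
    | Sum.inr d => if d = b then K else ({a'} ×ˢ univ) ∪ (univ ×ˢ {d}) with hf
  have hKconn : IsConnected K := hconn' b'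
  have hmem : ∀ i, (a', b') ∈ f i := by
    rintro (c | d) <;> simp only [hf] <;> split <;> simp [hK]
  have hKnot : (a, b) ∉ K := by
    simp only [hK, mem_union, mem_prod, mem_singleton_iff, mem_univ, and_true, true_and]
    rintro (h | h)
    · exact ha h.symm
    · exact hb h.symm
  have hnot : ∀ i, (a, b) ∉ f i := by
    rintro (c | d) <;> simp only [hf] <;> split
    · exact hKnot
    · rename_i hc
      simp only [mem_union, mem_prod, mem_singleton_iff, mem_univ, and_true, true_and]
      rintro (h | h)
      · exact hc h.symm
      · exact hb h.symm
    · exact hKnot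
    · rename_i hd
      simp only [mem_union, mem_prod, mem_singleton_iff, mem_univ, and_true, true_and]
      rintro (h | h)
      · exact ha h.symm
      · exact hd h.symm
  have hUnion : (⋃ i, f i) = ({(a, b)}ᶜ : Set (X₁ × X₂)) := by
    apply Subset.antisymm
    · exact iUnion_subset fun i => subset_compl_singleton_iff.2 (hnot i)
    · rintro ⟨c, d⟩ hcd
      simp only [mem_compl_iff, mem_singleton_iff, Prod.mk.injEq, not_and] at hcd
      by_cases hc : c = a
      · have hd : d ≠ b := hcd hc
        refine mem_iUnion.2 ⟨Sum.inr d, ?_⟩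
        simp only [hf, if_neg hd]
        simp
      · refine mem_iUnion.2 ⟨Sum.inl c, ?_⟩
        simp only [hf, if_neg hc]
        simp
  rw [← hUnion]
  refine ⟨⟨(a', b'), mem_iUnion.2 ⟨Sum.inl a', hmem (Sum.inl a')⟩⟩, ?_⟩
  refine isPreconnected_iUnion ⟨(a', b'), mem_iInter.2 hmem⟩ ?_
  rintro (c | d) <;> simp only [hf] <;> split
  · exact hKconn.isPreconnected
  · exact (hconn c).isPreconnected
  · exact hKconn.isPreconnected
  · exact (hconn' d).isPreconnected

/-- If a connected topological space `X` is homeomorphic to a product `X₁ × X₂` of two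
topological spaces each having at least two points, then the complement of every
singleton in `X` is connected. -/
theorem stmt13 (X X₁ X₂ : Type*) [TopologicalSpace X] [TopologicalSpace X₁]
    [TopologicalSpace X₂] [ConnectedSpace X] (h₁ : ∃ a b : X₁, a ≠ b)
    (h₂ : ∃ a b : X₂, a ≠ b) (e : X ≃ₜ X₁ × X₂) :
    ∀ x : X, IsConnected ({x}ᶜ : Set X) := by
  intro x
  obtain ⟨c, c', hc⟩ := h₁
  obtain ⟨d, d', hd⟩ := h₂
  have : Nonempty X₁ := ⟨c⟩
  have : Nonempty X₂ := ⟨d⟩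
  have hprod : ConnectedSpace (X₁ × X₂) := e.surjective.connectedSpace e.continuous
  have hX₁ : ConnectedSpace X₁ :=
    (Prod.fst_surjective (α := X₁) (β := X₂)).connectedSpace continuous_fst
  have hX₂ : ConnectedSpace X₂ :=
    (Prod.snd_surjective (α := X₁) (β := X₂)).connectedSpace continuous_snd
  set p := e x with hp
  have ha : ∃ a' : X₁, a' ≠ p.1 := by
    by_cases h : c = p.1
    · exact ⟨c', by rw [← h]; exact hc.symm⟩
    · exact ⟨c, h⟩
  have hbex : ∃ b' : X₂, b' ≠ p.2 := by
    by_cases h : d = p.2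
    · exact ⟨d', by rw [← h]; exact hd.symm⟩
    · exact ⟨d, h⟩
  obtain ⟨a', ha'⟩ := ha
  obtain ⟨b', hb'⟩ := hbex
  have hcp : IsConnected ({(p.1, p.2)}ᶜ : Set (X₁ × X₂)) :=
    prod_compl_singleton_connected ha' hb'
  have himg : e.symm '' ({(p.1, p.2)}ᶜ : Set (X₁ × X₂)) = ({x}ᶜ : Set X) := by
    rw [show ((p.1, p.2) : X₁ × X₂) = p from rfl,
      show (⇑e.symm : X₁ × X₂ → X) = ⇑e.symm.toEquiv from rfl,
      Equiv.image_compl e.symm.toEquiv]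
    congr 1
    simp [hp]
  rw [← himg]
  exact hcp.image _ e.symm.continuous.continuousOn
end
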